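/- arXiv:2012.08438 — 3 statements merged into one kernel-verified Lean document; each statement's English description precedes it below -/
import Mathlib

section
/- Define $L(\lambda, a, b) = \int_0^{\infty} e^{-\lambda(2x+1)} x^{a-1} (1+x)^{-b}\, dx$. Then for $\lambda > 0$ and $a, b > 0$, the transformation property $\frac{(2\lambda)^a}{\Gamma(a)} L(\lambda, a, b) = \frac{(2\lambda)^b}{\Gamma(b)} L(\lambda, b, a)$ holds. -/
/-!
Write `z = 2λ`. Both sides arise from the double integral
`∫∫_{x,t>0} x^(a-1) t^(b-1) e^{-z(x+t+xt)}`, whose weight is symmetric in `x` and `t`: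
integrating out `t` via `∫ t^(b-1) e^{-z(1+x)t} dt = Γ(b) / (z(1+x))^b` gives
`Γ(b) / z^b · e^λ L(λ, a, b)`, and integrating out `x` first gives `Γ(a) / z^a · e^λ L(λ, b, a)`.
Fubini applies because the integrand is dominated by a product of two Gamma integrands.
-/

open MeasureTheory Real

noncomputable def Lfun (lam a b : ℝ) : ℝ :=
  ∫ x in Set.Ioi (0 : ℝ), Real.exp (-lam * (2 * x + 1)) * x ^ (a - 1) * (1 + x) ^ (-b)

open Set

namespace Lfun

/-- `Γ(a) U(a, a - b + 1, z)`, with `U` Tricomi's confluent hypergeometric function. -/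
noncomputable def tricomiIntegral (z a b : ℝ) : ℝ :=
  ∫ x in Ioi (0 : ℝ), x ^ (a - 1) * (1 + x) ^ (-b) * exp (-(z * x))

noncomputable def doubleKernel (z a b x t : ℝ) : ℝ :=
  x ^ (a - 1) * t ^ (b - 1) * exp (-(z * (x + t + x * t)))

lemma doubleKernel_comm (z a b x t : ℝ) : doubleKernel z a b x t = doubleKernel z b a t x := by
  unfold doubleKernel
  ring_nf

lemma integrableOn_rpow_mul_exp_neg_mul {s r : ℝ} (hs : 0 < s) (hr : 0 < r) :
    IntegrableOn (fun t : ℝ => t ^ (s - 1) * exp (-(r * t))) (Ioi 0) := by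
  have h := integrableOn_rpow_mul_exp_neg_mul_rpow (s := s - 1) (by linarith) zero_lt_one hr
  simpa only [rpow_one, neg_mul] using h

lemma Lfun_eq_exp_mul_tricomiIntegral (lam a b : ℝ) :
    Lfun lam a b = exp (-lam) * tricomiIntegral (2 * lam) a b := by
  rw [Lfun, tricomiIntegral, ← integral_const_mul]
  refine setIntegral_congr_fun measurableSet_Ioi fun x _ => ?_
  rw [show -lam * (2 * x + 1) = -lam + -(2 * lam * x) by ring, exp_add]
  ring

lemma integral_doubleKernel_right {z a b x : ℝ} (hz : 0 < z) (hb : 0 < b) (hx : 0 < x) :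
    ∫ t in Ioi (0 : ℝ), doubleKernel z a b x t =
      Gamma b / z ^ b * (x ^ (a - 1) * (1 + x) ^ (-b) * exp (-(z * x))) := by
  have hx1 : 0 < 1 + x := by linarith
  have hsplit : ∀ t, doubleKernel z a b x t =
      x ^ (a - 1) * exp (-(z * x)) * (t ^ (b - 1) * exp (-(z * (1 + x) * t))) := fun t => by
    rw [doubleKernel, show -(z * (x + t + x * t)) = -(z * x) + -(z * (1 + x) * t) by ring, exp_add]
    ring
  simp_rw [hsplit]
  rw [integral_const_mul, integral_rpow_mul_exp_neg_mul_Ioi hb (by positivity),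
    div_rpow zero_le_one (by positivity), one_rpow, mul_rpow hz.le hx1.le, rpow_neg hx1.le]
  field_simp

lemma integrable_doubleKernel {z a b : ℝ} (hz : 0 < z) (ha : 0 < a) (hb : 0 < b) :
    Integrable (Function.uncurry (doubleKernel z a b))
      ((volume.restrict (Ioi 0)).prod (volume.restrict (Ioi 0))) := by
  refine ((integrableOn_rpow_mul_exp_neg_mul ha hz).mul_prod
    (integrableOn_rpow_mul_exp_neg_mul hb hz)).mono'
    (by unfold doubleKernel; fun_prop) ?_
  rw [Measure.prod_restrict]
  refine (ae_restrict_iff' (measurableSet_Ioi.prod measurableSet_Ioi)).2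
    (Filter.Eventually.of_forall ?_)
  rintro ⟨x, t⟩ ⟨hx, ht⟩
  rw [mem_Ioi] at hx ht
  have hexp : exp (-(z * (x + t + x * t))) ≤ exp (-(z * x)) * exp (-(z * t)) := by
    rw [← exp_add, exp_le_exp]
    nlinarith [mul_pos (mul_pos hz hx) ht]
  rw [Function.uncurry_apply_pair, doubleKernel, norm_of_nonneg (by positivity)]
  calc x ^ (a - 1) * t ^ (b - 1) * exp (-(z * (x + t + x * t)))
      ≤ x ^ (a - 1) * t ^ (b - 1) * (exp (-(z * x)) * exp (-(z * t))) := by gcongr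
    _ = x ^ (a - 1) * exp (-(z * x)) * (t ^ (b - 1) * exp (-(z * t))) := by ring

lemma integral_integral_doubleKernel {z a b : ℝ} (hz : 0 < z) (hb : 0 < b) :
    ∫ x in Ioi (0 : ℝ), ∫ t in Ioi (0 : ℝ), doubleKernel z a b x t =
      Gamma b / z ^ b * tricomiIntegral z a b := by
  rw [tricomiIntegral, ← integral_const_mul]
  exact setIntegral_congr_fun measurableSet_Ioi fun x hx => integral_doubleKernel_right hz hb hx

lemma tricomiIntegral_symm {z a b : ℝ} (hz : 0 < z) (ha : 0 < a) (hb : 0 < b) :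
    z ^ a / Gamma a * tricomiIntegral z a b = z ^ b / Gamma b * tricomiIntegral z b a := by
  have hFubini : Gamma b / z ^ b * tricomiIntegral z a b =
      Gamma a / z ^ a * tricomiIntegral z b a := by
    rw [← integral_integral_doubleKernel hz hb, ← integral_integral_doubleKernel hz ha,
      integral_integral_swap (integrable_doubleKernel hz ha hb)]
    simp_rw [doubleKernel_comm z a b]
  have := Gamma_pos_of_pos ha
  have := Gamma_pos_of_pos hb
  have := rpow_pos_of_pos hz a
  have := rpow_pos_of_pos hz b
  field_simp at hFubini ⊢
  linarith

end Lfun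

open Lfun in
theorem stmt3 (lam a b : ℝ) (hlam : 0 < lam) (ha : 0 < a) (hb : 0 < b) :
    (2 * lam) ^ a / Real.Gamma a * Lfun lam a b =
      (2 * lam) ^ b / Real.Gamma b * Lfun lam b a := by
  rw [Lfun_eq_exp_mul_tricomiIntegral, Lfun_eq_exp_mul_tricomiIntegral,
    mul_left_comm, tricomiIntegral_symm (by positivity) ha hb, mul_left_comm]
end

section
/- For all real $x > 0$ and real $\alpha, \beta$ with $0 < \alpha \le \beta$ satisfying $x + \alpha > 0$ and $x+\beta>0$, one has $x^{\beta - \alpha} \frac{\Gamma(x+\alpha)}{\Gamma(x+\beta)} \leq \frac{x+\beta}{x+\alpha}$. -/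
/-!
By `Γ(s + 1) = s Γ(s)` the inequality reads `x ^ (β - α) Γ(x + α + 1) ≤ Γ(x + β + 1)`.
Since `log Γ` is convex, its secant slope over `[x + α + 1, x + β + 1]` is at least its slope
over `[x + α, x + α + 1]`, which by the functional equation is `log (x + α) ≥ log x`.
-/

open Real

namespace Real

lemma log_Gamma_add_one_sub_log_Gamma {y : ℝ} (hy : 0 < y) :
    log (Gamma (y + 1)) - log (Gamma y) = log y := by
  rw [Gamma_add_one hy.ne', log_mul hy.ne' (Gamma_pos_of_pos hy).ne', add_sub_cancel_right]

lemma rpow_mul_Gamma_add_one_le_Gamma {y t : ℝ} (hy : 0 < y) (ht : 0 ≤ t) :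
    y ^ t * Gamma (y + 1) ≤ Gamma (y + 1 + t) := by
  rcases ht.eq_or_lt with rfl | ht
  · simp
  have hslope := convexOn_log_Gamma.slope_mono_adjacent (Set.mem_Ioi.2 hy)
    (Set.mem_Ioi.2 (by linarith : 0 < y + 1 + t)) (lt_add_one y) (lt_add_of_pos_right _ ht)
  simp only [Function.comp_apply, add_sub_cancel_left, div_one,
    log_Gamma_add_one_sub_log_Gamma hy, le_div_iff₀ ht] at hslope
  have hΓ : 0 < Gamma (y + 1) := Gamma_pos_of_pos (by linarith)
  rw [← log_le_log_iff (by positivity) (Gamma_pos_of_pos (by linarith)),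
    log_mul (rpow_pos_of_pos hy t).ne' hΓ.ne', log_rpow hy]
  linarith

end Real

theorem stmt4 (x α β : ℝ) (hx : 0 < x) (hα : 0 < α) (hαβ : α ≤ β)
    (h1 : 0 < x + α) (h2 : 0 < x + β) :
    x ^ (β - α) * (Real.Gamma (x + α) / Real.Gamma (x + β)) ≤ (x + β) / (x + α) := by
  have hΓβ := Gamma_pos_of_pos h2
  rw [mul_div_assoc', div_le_div_iff₀ hΓβ h1]
  calc x ^ (β - α) * Gamma (x + α) * (x + α)
      ≤ (x + α) ^ (β - α) * Gamma (x + α + 1) := by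
        rw [Gamma_add_one h1.ne', mul_assoc, mul_comm (Gamma _)]
        gcongr
        linarith
    _ ≤ Gamma (x + α + 1 + (β - α)) := rpow_mul_Gamma_add_one_le_Gamma h1 (sub_nonneg.2 hαβ)
    _ = (x + β) * Gamma (x + β) := by
        rw [← Gamma_add_one h2.ne']
        ring_nf
end

section
/- For real parameters $\delta, \beta > 0$ and $\eta$ with $\eta - \delta - \beta > 0$, the Gauss hypergeometric value at 1 gives $\sum_{k=0}^{\infty} \frac{\Gamma(\delta + k)\Gamma(\beta + k)}{\Gamma(\eta + k)\Gamma(k+1)} = \frac{\Gamma(\delta)\Gamma(\beta)\Gamma(\eta - \delta - \beta)}{\Gamma(\eta - \delta)\Gamma(\eta - \beta)}$. -/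
/-!
Since Γ(δ + k) Γ(η - δ) / Γ(η + k) = ∫₀¹ x ^ (δ + k - 1) (1 - x) ^ (η - δ - 1) dx, the series is
Γ(η - δ)⁻¹ ∫₀¹ x ^ (δ - 1) (1 - x) ^ (η - δ - 1) ∑ₖ Γ(β + k) x ^ k / k! dx. The same trick with
Γ(β + k) = ∫₀^∞ t ^ (β + k - 1) e ^ (-t) dt turns the inner series into
∫₀^∞ t ^ (β - 1) e ^ (-(1 - x) t) dt = Γ(β) (1 - x) ^ (-β), and what is left is the Beta integral
B(δ, η - δ - β). All terms are nonnegative, so every interchange of sum and integral is Tonelli's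
theorem in `ℝ≥0∞`.
-/

open Real MeasureTheory Set
open scoped Nat

section

variable {α ι : Type*} [MeasurableSpace α] {μ : Measure α}

theorem lintegral_ofReal_eq_of_integral_eq {f : α → ℝ} {r : ℝ} (hf : 0 ≤ᵐ[μ] f)
    (h : ∫ x, f x ∂μ = r) (hr : r ≠ 0) :
    ∫⁻ x, ENNReal.ofReal (f x) ∂μ = ENNReal.ofReal r := by
  rw [← ofReal_integral_eq_lintegral_ofReal (Integrable.of_integral_ne_zero (h ▸ hr)) hf, h]

theorem tsum_eq_of_tsum_ofReal_eq {f : ι → ℝ} {r : ℝ} (hf : ∀ i, 0 ≤ f i) (hr : 0 ≤ r)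
    (h : ∑' i, ENNReal.ofReal (f i) = ENNReal.ofReal r) : ∑' i, f i = r := by
  calc ∑' i, f i = ∑' i, (ENNReal.ofReal (f i)).toReal := by
        simp only [ENNReal.toReal_ofReal (hf _)]
    _ = r := by rw [← ENNReal.tsum_toReal_eq fun _ => ENNReal.ofReal_ne_top, h,
        ENNReal.toReal_ofReal hr]

theorem tsum_ofReal_of_hasSum {f : ι → ℝ} {r : ℝ} (hf : ∀ i, 0 ≤ f i) (h : HasSum f r) :
    ∑' i, ENNReal.ofReal (f i) = ENNReal.ofReal r := by
  rw [← ENNReal.ofReal_tsum_of_nonneg hf h.summable, h.tsum_eq]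

theorem tsum_mul_lintegral_eq_lintegral_tsum {c : ℕ → ENNReal} {f : ℕ → α → ENNReal}
    (hf : ∀ k, AEMeasurable (f k) μ) :
    ∑' k, c k * ∫⁻ x, f k x ∂μ = ∫⁻ x, ∑' k, c k * f k x ∂μ := by
  simp_rw [← lintegral_const_mul'' _ (hf _)]
  exact (lintegral_tsum fun k => (hf k).const_mul _).symm

end

theorem tsum_mul_lintegral_pow_mul {s : Set ℝ} (hs : MeasurableSet s) (hs₀ : s ⊆ Ici 0)
    {c : ℕ → ℝ} (hc : ∀ k, 0 ≤ c k) {w : ℝ → ℝ} (hw : Measurable w) :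
    ∑' k, ENNReal.ofReal (c k) * ∫⁻ x in s, ENNReal.ofReal (x ^ k * w x) =
      ∫⁻ x in s, (∑' k, ENNReal.ofReal (c k * x ^ k)) * ENNReal.ofReal (w x) := by
  rw [tsum_mul_lintegral_eq_lintegral_tsum fun k => by fun_prop]
  refine setLIntegral_congr_fun hs fun x hx => ?_
  have hx₀ : 0 ≤ x := hs₀ hx
  rw [← ENNReal.tsum_mul_right]
  refine tsum_congr fun k => ?_
  rw [← ENNReal.ofReal_mul (hc k), ← ENNReal.ofReal_mul (mul_nonneg (hc k) (pow_nonneg hx₀ k)),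
    mul_assoc]

theorem lintegral_rpow_mul_exp_neg_mul_Ioi {a r : ℝ} (ha : 0 < a) (hr : 0 < r) :
    ∫⁻ t in Ioi 0, ENNReal.ofReal (t ^ (a - 1) * exp (-(r * t))) =
      ENNReal.ofReal ((1 / r) ^ a * Gamma a) :=
  lintegral_ofReal_eq_of_integral_eq
    ((ae_restrict_iff' measurableSet_Ioi).2 (ae_of_all _ fun t ht => by
      have : (0 : ℝ) < t := ht
      positivity))
    (integral_rpow_mul_exp_neg_mul_Ioi ha hr) (by positivity)

theorem integral_rpow_mul_one_sub_rpow_Ioo {a b : ℝ} (ha : 0 < a) (hb : 0 < b) :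
    ∫ x in Ioo 0 1, x ^ (a - 1) * (1 - x) ^ (b - 1) = Gamma a * Gamma b / Gamma (a + b) := by
  have hbeta := Complex.betaIntegral_eq_Gamma_mul_div a b (by simpa using ha) (by simpa using hb)
  rw [Complex.betaIntegral, intervalIntegral.integral_of_le zero_le_one,
    integral_Ioc_eq_integral_Ioo] at hbeta
  rw [← Complex.ofReal_add, Complex.Gamma_ofReal, Complex.Gamma_ofReal, Complex.Gamma_ofReal]
    at hbeta
  apply Complex.ofReal_injective
  push_cast
  rw [← hbeta, ← integral_complex_ofReal]
  refine setIntegral_congr_fun measurableSet_Ioo fun x hx => ?_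
  rw [Complex.ofReal_mul, Complex.ofReal_cpow hx.1.le, Complex.ofReal_cpow (sub_pos.2 hx.2).le]
  push_cast
  rfl

theorem lintegral_rpow_mul_one_sub_rpow_Ioo {a b : ℝ} (ha : 0 < a) (hb : 0 < b) :
    ∫⁻ x in Ioo 0 1, ENNReal.ofReal (x ^ (a - 1) * (1 - x) ^ (b - 1)) =
      ENNReal.ofReal (Gamma a * Gamma b / Gamma (a + b)) :=
  lintegral_ofReal_eq_of_integral_eq
    ((ae_restrict_iff' measurableSet_Ioo).2 (ae_of_all _ fun x hx => by
      have := hx.1; have := sub_pos.2 hx.2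
      positivity))
    (integral_rpow_mul_one_sub_rpow_Ioo ha hb) (by positivity)

theorem pow_mul_rpow_sub_one {x : ℝ} (hx : 0 < x) (a : ℝ) (k : ℕ) :
    x ^ k * x ^ (a - 1) = x ^ (a + k - 1) := by
  rw [← rpow_natCast, ← rpow_add hx]
  ring_nf

theorem lintegral_pow_mul_rpow_mul_exp_neg_Ioi {b : ℝ} (hb : 0 < b) (k : ℕ) :
    ∫⁻ x in Ioi 0, ENNReal.ofReal (x ^ k * (x ^ (b - 1) * exp (-x))) =
      ENNReal.ofReal (Gamma (b + k)) := by
  have := lintegral_rpow_mul_exp_neg_mul_Ioi (a := b + k) (by positivity) one_pos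
  simp only [one_mul, div_one, one_rpow] at this
  rw [← this]
  refine setLIntegral_congr_fun measurableSet_Ioi fun x hx => ?_
  rw [← mul_assoc, pow_mul_rpow_sub_one hx]

theorem lintegral_pow_mul_rpow_mul_one_sub_rpow_Ioo {a b : ℝ} (ha : 0 < a) (hb : 0 < b) (k : ℕ) :
    ∫⁻ x in Ioo 0 1, ENNReal.ofReal (x ^ k * (x ^ (a - 1) * (1 - x) ^ (b - 1))) =
      ENNReal.ofReal (Gamma (a + k) * Gamma b / Gamma (a + k + b)) := by
  rw [← lintegral_rpow_mul_one_sub_rpow_Ioo (by positivity) hb]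
  refine setLIntegral_congr_fun measurableSet_Ioo fun x hx => ?_
  rw [← mul_assoc, pow_mul_rpow_sub_one hx.1]

theorem tsum_ofReal_Gamma_add_div_factorial_mul_pow {b t : ℝ} (hb : 0 < b) (ht₀ : 0 ≤ t)
    (ht₁ : t < 1) :
    ∑' k : ℕ, ENNReal.ofReal (Gamma (b + k) / k ! * t ^ k) =
      ENNReal.ofReal (Gamma b * (1 - t) ^ (-b)) := by
  have hterm (k : ℕ) : ENNReal.ofReal (Gamma (b + k) / k ! * t ^ k) =
      ENNReal.ofReal (t ^ k / k !) *
        ∫⁻ x in Ioi 0, ENNReal.ofReal (x ^ k * (x ^ (b - 1) * exp (-x))) := by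
    rw [lintegral_pow_mul_rpow_mul_exp_neg_Ioi hb, ← ENNReal.ofReal_mul (by positivity)]
    ring_nf
  have hexp {x : ℝ} (hx : 0 ≤ x) :
      ∑' k : ℕ, ENNReal.ofReal (t ^ k / k ! * x ^ k) = ENNReal.ofReal (exp (t * x)) := by
    have := NormedSpace.expSeries_div_hasSum_exp (t * x)
    rw [← exp_eq_exp_ℝ] at this
    rw [← tsum_ofReal_of_hasSum (fun k => by positivity) this]
    simp only [mul_pow, div_mul_eq_mul_div]
  calc ∑' k : ℕ, ENNReal.ofReal (Gamma (b + k) / k ! * t ^ k)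
      = ∫⁻ x in Ioi 0, (∑' k : ℕ, ENNReal.ofReal (t ^ k / k ! * x ^ k)) *
          ENNReal.ofReal (x ^ (b - 1) * exp (-x)) := by
        simp_rw [hterm]
        exact tsum_mul_lintegral_pow_mul measurableSet_Ioi Ioi_subset_Ici_self
          (fun k => by positivity) (by fun_prop)
    _ = ∫⁻ x in Ioi 0, ENNReal.ofReal (x ^ (b - 1) * exp (-((1 - t) * x))) := by
        refine setLIntegral_congr_fun measurableSet_Ioi fun x hx => ?_
        rw [hexp (le_of_lt hx), ← ENNReal.ofReal_mul (exp_pos _).le, mul_left_comm, ← exp_add]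
        ring_nf
    _ = ENNReal.ofReal ((1 / (1 - t)) ^ b * Gamma b) :=
        lintegral_rpow_mul_exp_neg_mul_Ioi hb (by linarith)
    _ = ENNReal.ofReal (Gamma b * (1 - t) ^ (-b)) := by
        rw [one_div, inv_rpow (by linarith), ← rpow_neg (by linarith), mul_comm]

theorem tsum_ofReal_Gamma_mul_Gamma_div {δ β η : ℝ} (hδ : 0 < δ) (hβ : 0 < β)
    (h : 0 < η - δ - β) :
    ∑' k : ℕ, ENNReal.ofReal (Gamma (δ + k) * Gamma (β + k) / (Gamma (η + k) * Gamma (k + 1))) =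
      ENNReal.ofReal (Gamma δ * Gamma β * Gamma (η - δ - β) / (Gamma (η - δ) * Gamma (η - β))) := by
  have hηδ : 0 < η - δ := by linarith
  have hηβ : 0 < η - β := by linarith
  have hterm (k : ℕ) :
      ENNReal.ofReal (Gamma (δ + k) * Gamma (β + k) / (Gamma (η + k) * Gamma (k + 1))) =
        ENNReal.ofReal (Gamma (β + k) / k !) *
          (∫⁻ x in Ioo 0 1, ENNReal.ofReal (x ^ k * (x ^ (δ - 1) * (1 - x) ^ (η - δ - 1)))) *
          ENNReal.ofReal (Gamma (η - δ))⁻¹ := by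
    rw [lintegral_pow_mul_rpow_mul_one_sub_rpow_Ioo hδ hηδ, ← ENNReal.ofReal_mul (by positivity),
      ← ENNReal.ofReal_mul (by positivity), show δ + k + (η - δ) = η + k by ring,
      Gamma_nat_eq_factorial]
    have : Gamma (η - δ) ≠ 0 := by positivity
    field_simp
  calc _ = (∑' k : ℕ, ENNReal.ofReal (Gamma (β + k) / k !) *
          ∫⁻ x in Ioo 0 1, ENNReal.ofReal (x ^ k * (x ^ (δ - 1) * (1 - x) ^ (η - δ - 1)))) *
          ENNReal.ofReal (Gamma (η - δ))⁻¹ := by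
        simp_rw [hterm]
        exact ENNReal.tsum_mul_right
    _ = (∫⁻ x in Ioo 0 1, (∑' k : ℕ, ENNReal.ofReal (Gamma (β + k) / k ! * x ^ k)) *
          ENNReal.ofReal (x ^ (δ - 1) * (1 - x) ^ (η - δ - 1))) *
          ENNReal.ofReal (Gamma (η - δ))⁻¹ := by
        rw [tsum_mul_lintegral_pow_mul measurableSet_Ioo (fun x hx => hx.1.le)
          (fun k => by positivity) (by fun_prop)]
    _ = (∫⁻ x in Ioo 0 1, ENNReal.ofReal (Gamma β) *
          ENNReal.ofReal (x ^ (δ - 1) * (1 - x) ^ (η - δ - β - 1))) *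
          ENNReal.ofReal (Gamma (η - δ))⁻¹ := by
        congr 1
        refine setLIntegral_congr_fun measurableSet_Ioo fun x hx => ?_
        have h1x : 0 < 1 - x := sub_pos.2 hx.2
        rw [tsum_ofReal_Gamma_add_div_factorial_mul_pow hβ hx.1.le hx.2,
          ← ENNReal.ofReal_mul (by positivity), ← ENNReal.ofReal_mul (by positivity),
          show η - δ - 1 = β + (η - δ - β - 1) by ring, rpow_add h1x, rpow_neg h1x.le]
        field_simp
    _ = _ := by
        rw [lintegral_const_mul' _ _ ENNReal.ofReal_ne_top,
          lintegral_rpow_mul_one_sub_rpow_Ioo hδ h,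
          show δ + (η - δ - β) = η - β by ring, ← ENNReal.ofReal_mul (by positivity),
          ← ENNReal.ofReal_mul (by positivity)]
        congr 1
        field_simp

theorem stmt11 (δ β η : ℝ) (hδ : 0 < δ) (hβ : 0 < β) (h : 0 < η - δ - β) :
    ∑' k : ℕ, Real.Gamma (δ + k) * Real.Gamma (β + k) /
        (Real.Gamma (η + k) * Real.Gamma (k + 1)) =
      Real.Gamma δ * Real.Gamma β * Real.Gamma (η - δ - β) /
        (Real.Gamma (η - δ) * Real.Gamma (η - β)) := by
  have hη : 0 < η := by linarith
  have hηδ : 0 < η - δ := by linarith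
  have hηβ : 0 < η - β := by linarith
  exact tsum_eq_of_tsum_ofReal_eq (fun k => by positivity) (by positivity)
    (tsum_ofReal_Gamma_mul_Gamma_div hδ hβ h)
end
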